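/- Let P ∈ ℝ^{n×n} have nonnegative entries, γ ∈ [0,1) with γ‖P‖ < 1, and let L := (I − γP)⁻¹ be the Leontief matrix. Then for all indices i, k, m: L_{mi} L_{kk} − L_{mk} L_{ki} ≥ 0; in particular L_{mi} ≥ L_{mk} L_{ki} / L_{kk}. -/

import Mathlib

open Matrix
open scoped Matrix.Norms.L2Operator

/-!
Write `L = (1 - A)⁻¹` and `B = (1 - A')⁻¹`, where `A' = A (1 - E)` with `E = single k k 1` is `A`
with its `k`-th column deleted. Since `1 - E` is an orthogonal projection, `‖A'‖ ≤ ‖A‖ < 1`, so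
both inverses are Neumann series of nonnegative matrices and hence nonnegative. The identity
`L = B + B A E L` is a first-passage decomposition through `k`: for `m ≠ k` it reads
`L m j = B m j + (B A) m k * L k j`, with `B m k = 0`. Eliminating `(B A) m k` between `j = i` and
`j = k` gives `L m i * L k k - L m k * L k i = L k k * B m i ≥ 0`.
-/

namespace Matrix

variable {ι : Type*} [Fintype ι] [DecidableEq ι]

section CommRing

variable {α : Type*} [CommRing α]

theorem mul_single_one_mul_apply (X Y : Matrix ι ι α) (k a b : ι) :
    (X * single k k (1 : α) * Y) a b = X a k * Y k b := by
  rw [Matrix.mul_assoc, mul_apply, Finset.sum_eq_single k]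
  · rw [single_mul_apply_same, one_mul]
  · intro l _ hl
    rw [single_mul_apply_of_ne 1 k k l b hl, mul_zero]
  · simp

theorem inv_one_sub_mul_one_sub_single_mul_single {A : Matrix ι ι α} {k : ι}
    (hB : IsUnit (1 - A * (1 - single k k (1 : α))).det) :
    (1 - A * (1 - single k k 1))⁻¹ * single k k 1 = single k k (1 : α) := by
  set B := (1 - A * (1 - single k k (1 : α)))⁻¹
  calc B * single k k 1 = B * ((1 - A * (1 - single k k 1)) * single k k 1) := by
        simp [Matrix.sub_mul, Matrix.mul_assoc, Matrix.mul_sub]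
    _ = single k k 1 := by rw [← Matrix.mul_assoc, nonsing_inv_mul _ hB, Matrix.one_mul]

theorem inv_one_sub_eq_add {A : Matrix ι ι α} {k : ι} (hL : IsUnit (1 - A).det)
    (hB : IsUnit (1 - A * (1 - single k k (1 : α))).det) :
    (1 - A)⁻¹ = (1 - A * (1 - single k k 1))⁻¹
      + (1 - A * (1 - single k k 1))⁻¹ * A * single k k 1 * (1 - A)⁻¹ := by
  set B := (1 - A * (1 - single k k (1 : α)))⁻¹
  calc (1 - A)⁻¹ = B * (1 - A * (1 - single k k 1)) * (1 - A)⁻¹ := by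
        rw [nonsing_inv_mul _ hB, Matrix.one_mul]
    _ = B * ((1 - A) + A * single k k 1) * (1 - A)⁻¹ := by
        congr 2; rw [Matrix.mul_sub, Matrix.mul_one]; abel
    _ = B + B * A * single k k 1 * (1 - A)⁻¹ := by
        rw [Matrix.mul_add, Matrix.add_mul, Matrix.mul_assoc B, mul_nonsing_inv _ hL,
          Matrix.mul_one, Matrix.mul_assoc B A]

theorem inv_one_sub_apply_mul_sub_eq {A : Matrix ι ι α} {k : ι} (hL : IsUnit (1 - A).det)
    (hB : IsUnit (1 - A * (1 - single k k (1 : α))).det) (i : ι) {m : ι} (hm : m ≠ k) :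
    (1 - A)⁻¹ m i * (1 - A)⁻¹ k k - (1 - A)⁻¹ m k * (1 - A)⁻¹ k i
      = (1 - A)⁻¹ k k * (1 - A * (1 - single k k (1 : α)))⁻¹ m i := by
  have hBmk : (1 - A * (1 - single k k (1 : α)))⁻¹ m k = 0 := by
    have := congr_fun (congr_fun (inv_one_sub_mul_one_sub_single_mul_single hB) m) k
    rwa [mul_single_apply_same, mul_one,
      single_apply_of_ne _ _ _ _ _ fun h => hm h.1.symm] at this
  have hrow (j : ι) : (1 - A)⁻¹ m j = (1 - A * (1 - single k k (1 : α)))⁻¹ m j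
      + ((1 - A * (1 - single k k (1 : α)))⁻¹ * A) m k * (1 - A)⁻¹ k j := by
    conv_lhs => rw [inv_one_sub_eq_add hL hB]
    rw [add_apply, mul_single_one_mul_apply]
  rw [hrow i, hrow k, hBmk]
  ring

end CommRing

theorem hasSum_inv_one_sub_apply {A : Matrix ι ι ℝ} (hA : ‖A‖ < 1) (i j : ι) :
    HasSum (fun t : ℕ => (A ^ t) i j) ((1 - A)⁻¹ i j) := by
  have h := hasSum_geom_series_inverse A hA
  rw [← nonsing_inv_eq_ringInverse] at h
  exact Pi.hasSum.1 (Pi.hasSum.1 h i) j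

theorem inv_one_sub_apply_nonneg {A : Matrix ι ι ℝ} (hA₀ : ∀ i j, 0 ≤ A i j) (hA : ‖A‖ < 1)
    (i j : ι) : 0 ≤ (1 - A)⁻¹ i j :=
  (hasSum_inv_one_sub_apply hA i j).nonneg fun t => pow_apply_nonneg hA₀ t i j

theorem one_le_inv_one_sub_apply_self {A : Matrix ι ι ℝ} (hA₀ : ∀ i j, 0 ≤ A i j)
    (hA : ‖A‖ < 1) (k : ι) : 1 ≤ (1 - A)⁻¹ k k := by
  simpa using le_hasSum (hasSum_inv_one_sub_apply hA k k) 0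
    fun t _ => pow_apply_nonneg hA₀ t k k

theorem isStarProjection_single_one {α : Type*} [Semiring α] [StarRing α] (k : ι) :
    IsStarProjection (single k k (1 : α)) where
  isIdempotentElem := by simp [IsIdempotentElem]
  isSelfAdjoint := by simp [IsSelfAdjoint, star_eq_conjTranspose, conjTranspose_single]

theorem norm_mul_one_sub_single_le {𝕜 : Type*} [RCLike 𝕜] (A : Matrix ι ι 𝕜) (k : ι) :
    ‖A * (1 - single k k 1)‖ ≤ ‖A‖ :=
  (norm_mul_le _ _).trans <| mul_le_of_le_one_right (norm_nonneg A)
    ((isStarProjection_single_one k).one_sub.norm_le)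

theorem mul_one_sub_single_apply_nonneg {A : Matrix ι ι ℝ} (hA₀ : ∀ i j, 0 ≤ A i j) (k a b : ι) :
    0 ≤ (A * (1 - single k k (1 : ℝ))) a b := by
  rw [Matrix.mul_sub, Matrix.mul_one, sub_apply]
  rcases eq_or_ne b k with rfl | hb
  · simp
  · simpa [mul_single_apply_of_ne _ _ _ _ _ hb] using hA₀ a b

theorem leontief_apply_mul_sub_nonneg {A : Matrix ι ι ℝ} (hA₀ : ∀ i j, 0 ≤ A i j) (hA : ‖A‖ < 1)
    (i k m : ι) : 0 ≤ (1 - A)⁻¹ m i * (1 - A)⁻¹ k k - (1 - A)⁻¹ m k * (1 - A)⁻¹ k i := by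
  rcases eq_or_ne m k with rfl | hm
  · exact (sub_eq_zero.2 (mul_comm _ _)).ge
  have hA' : ‖A * (1 - single k k 1)‖ < 1 := (norm_mul_one_sub_single_le A k).trans_lt hA
  have hdet {M : Matrix ι ι ℝ} (hM : ‖M‖ < 1) : IsUnit (1 - M).det :=
    (isUnit_iff_isUnit_det _).mp (isUnit_one_sub_of_norm_lt_one hM)
  rw [inv_one_sub_apply_mul_sub_eq (hdet hA) (hdet hA') i hm]
  exact mul_nonneg (inv_one_sub_apply_nonneg hA₀ hA k k)
    (inv_one_sub_apply_nonneg (mul_one_sub_single_apply_nonneg hA₀ k) hA' m i)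

end Matrix

theorem stmt_12_general {n : ℕ} (P : Matrix (Fin n) (Fin n) ℝ) (γ : ℝ)
    (hγ0 : 0 ≤ γ)
    (hnonneg : ∀ i j, 0 ≤ P i j) (hnorm : γ * ‖P‖ < 1) :
    ∀ i k m : Fin n,
      0 ≤ ((1 - γ • P)⁻¹) m i * ((1 - γ • P)⁻¹) k k
            - ((1 - γ • P)⁻¹) m k * ((1 - γ • P)⁻¹) k i ∧
      ((1 - γ • P)⁻¹) m k * ((1 - γ • P)⁻¹) k i / ((1 - γ • P)⁻¹) k k
        ≤ ((1 - γ • P)⁻¹) m i := by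
  intro i k m
  have hA₀ : ∀ i j, 0 ≤ (γ • P) i j := fun i j => mul_nonneg hγ0 (hnonneg i j)
  have hA : ‖γ • P‖ < 1 := by rwa [norm_smul, Real.norm_of_nonneg hγ0]
  have hminor := leontief_apply_mul_sub_nonneg hA₀ hA i k m
  have hkk : 0 < (1 - γ • P)⁻¹ k k := one_pos.trans_le (one_le_inv_one_sub_apply_self hA₀ hA k)
  exact ⟨hminor, by rw [div_le_iff₀ hkk]; linarith⟩

theorem stmt_12 {n : ℕ} (P : Matrix (Fin n) (Fin n) ℝ) (γ : ℝ)
    (hγ0 : 0 ≤ γ) (hγ1 : γ < 1)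
    (hnonneg : ∀ i j, 0 ≤ P i j) (hnorm : γ * ‖P‖ < 1) :
    ∀ i k m : Fin n,
      0 ≤ ((1 - γ • P)⁻¹) m i * ((1 - γ • P)⁻¹) k k
            - ((1 - γ • P)⁻¹) m k * ((1 - γ • P)⁻¹) k i ∧
      ((1 - γ • P)⁻¹) m k * ((1 - γ • P)⁻¹) k i / ((1 - γ • P)⁻¹) k k
        ≤ ((1 - γ • P)⁻¹) m i :=
  stmt_12_general P γ hγ0 hnonneg hnorm
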